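/- Let A: X ⇉ X* be maximal monotone and at most single-valued, with dom A a linear subspace on which A is linear and symmetric. Define f: X → (−∞,+∞] by f(x) = sup_{y ∈ dom A} ( ⟨x,Ay⟩ − ½⟨y,Ay⟩ ) and q_A: X → (−∞,+∞] by q_A(x) = ½⟨x,Ax⟩ for x ∈ dom A and +∞ otherwise. Then the biconjugate of q_A equals f: q_A** = f. -/
import Mathlib


noncomputable section
open scoped Classical
open Filter Topology

/-- A set-valued operator `A : X ⇉ X*` is monotone. -/
def MonotoneOp {X : Type*} [NormedAddCommGroup X] [NormedSpace ℝ X]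
    (A : X → Set (X →L[ℝ] ℝ)) : Prop :=
  ∀ ⦃x y : X⦄ ⦃x' y' : X →L[ℝ] ℝ⦄, x' ∈ A x → y' ∈ A y → 0 ≤ (x' - y') (x - y)

/-- A set-valued operator is maximal monotone if it is monotone and admits no proper
monotone extension (in the sense of graph inclusion). -/
def MaximalMonotoneOp {X : Type*} [NormedAddCommGroup X] [NormedSpace ℝ X]
    (A : X → Set (X →L[ℝ] ℝ)) : Prop :=
  MonotoneOp A ∧ ∀ B : X → Set (X →L[ℝ] ℝ), MonotoneOp B → (∀ x, A x ⊆ B x) → B = A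

/-- The Phelps–Simons function `f(x) = sup_{y ∈ dom A} (⟨x,Ay⟩ - ½⟨y,Ay⟩)` associated
with an at most single-valued `A : X ⇉ X*`. -/
def phelpsF {X : Type*} [NormedAddCommGroup X] [NormedSpace ℝ X]
    (A : X → Set (X →L[ℝ] ℝ)) : X → EReal :=
  fun x => ⨆ q : X × (X →L[ℝ] ℝ), ⨆ _ : q.2 ∈ A q.1,
    ((q.2 x - 1 / 2 * q.2 q.1 : ℝ) : EReal)

/-- The quadratic function `q_A(x) = ½⟨x,Ax⟩` for `x ∈ dom A`, `+∞` otherwise,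
associated with an at most single-valued `A : X ⇉ X*`. -/
def qOp {X : Type*} [NormedAddCommGroup X] [NormedSpace ℝ X]
    (A : X → Set (X →L[ℝ] ℝ)) : X → EReal :=
  fun x => if h : (A x).Nonempty then ((1 / 2 * h.choose x : ℝ) : EReal) else ⊤

/-- The Fenchel conjugate of an extended-real-valued `g : X → (-∞,+∞]`:
`g*(x*) = sup_x (⟨x,x*⟩ - g(x))`. -/
def econj {X : Type*} [NormedAddCommGroup X] [NormedSpace ℝ X]
    (g : X → EReal) : (X →L[ℝ] ℝ) → EReal :=
  fun x' => ⨆ x : X, ((x' x : ℝ) : EReal) - g x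

/-- The biconjugate of `g : X → (-∞,+∞]` (computed on `X`, using reflexivity):
`g**(x) = sup_{x*} (⟨x,x*⟩ - g*(x*))`. -/
def ebiconj {X : Type*} [NormedAddCommGroup X] [NormedSpace ℝ X]
    (g : X → EReal) : X → EReal :=
  fun x => ⨆ x' : X →L[ℝ] ℝ, ((x' x : ℝ) : EReal) - econj g x'

section Aux

variable {X : Type*} [NormedAddCommGroup X] [NormedSpace ℝ X]

/-- Any point monotonically related to the graph of a maximal monotone operator
belongs to the graph. -/
lemma mem_of_monotonically_related (A : X → Set (X →L[ℝ] ℝ))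
    (hmax : MaximalMonotoneOp A) (x : X) (x' : X →L[ℝ] ℝ)
    (hrel : ∀ ⦃y : X⦄ ⦃y' : X →L[ℝ] ℝ⦄, y' ∈ A y → 0 ≤ (x' - y') (x - y)) :
    x' ∈ A x := by
  let B : X → Set (X →L[ℝ] ℝ) := fun z => A z ∪ {w : X →L[ℝ] ℝ | z = x ∧ w = x'}
  have hmono : MonotoneOp B := by
    intro a b a' b' ha hb
    rcases ha with ha | ha <;> rcases hb with hb | hb
    · exact hmax.1 ha hb
    · obtain ⟨hb1, hb2⟩ := hb
      rw [hb1, hb2]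
      have hkey : (a' - x') (a - x) = (x' - a') (x - a) := by
        simp only [ContinuousLinearMap.sub_apply, map_sub]; ring
      rw [hkey]; exact hrel ha
    · obtain ⟨ha1, ha2⟩ := ha
      rw [ha1, ha2]
      exact hrel hb
    · obtain ⟨ha1, ha2⟩ := ha
      obtain ⟨hb1, hb2⟩ := hb
      rw [ha1, ha2, hb1, hb2]
      simp
  have hBA : B = A := hmax.2 B hmono (fun z => Set.subset_union_left)
  have : x' ∈ B x := Or.inr ⟨rfl, rfl⟩
  rwa [hBA] at this

/-- The graph of a maximal monotone operator is nonempty. -/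
lemma exists_mem_graph (A : X → Set (X →L[ℝ] ℝ)) (hmax : MaximalMonotoneOp A) :
    ∃ x x', x' ∈ A x := by
  by_contra h
  push_neg at h
  have hmono : MonotoneOp (fun _ : X => ({0} : Set (X →L[ℝ] ℝ))) := by
    intro a b a' b' ha hb
    simp only [Set.mem_singleton_iff] at ha hb
    subst ha; subst hb; simp
  have hBA := hmax.2 _ hmono (fun z w hw => absurd hw (h z w))
  have : (0 : X →L[ℝ] ℝ) ∈ A 0 := by
    rw [← hBA]; exact Set.mem_singleton _
  exact h 0 0 this

/-- Value of `qOp` at a point of the domain. -/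
lemma qOp_eq (A : X → Set (X →L[ℝ] ℝ)) (hsingle : ∀ x, (A x).Subsingleton)
    {x : X} {x' : X →L[ℝ] ℝ} (hx : x' ∈ A x) :
    qOp A x = ((1 / 2 * x' x : ℝ) : EReal) := by
  have hne : (A x).Nonempty := ⟨x', hx⟩
  simp only [qOp, dif_pos hne]
  have := hsingle x hne.choose_spec hx
  rw [this]

/-- The fundamental quadratic inequality for a monotone symmetric operator. -/
lemma key_ineq (A : X → Set (X →L[ℝ] ℝ)) (hmono : MonotoneOp A)
    (hsym : ∀ (x y : X) (x' y' : X →L[ℝ] ℝ), x' ∈ A x → y' ∈ A y → x' y = y' x)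
    {y z : X} {y' z' : X →L[ℝ] ℝ} (hy : y' ∈ A y) (hz : z' ∈ A z) :
    y' z - 1 / 2 * z' z ≤ 1 / 2 * y' y := by
  have h0 := hmono hz hy
  have hs := hsym z y z' y' hz hy
  simp only [ContinuousLinearMap.sub_apply, map_sub] at h0
  linarith

end Aux

/-- Corollary 6.2(iii). Let `A : X ⇉ X*` be maximal monotone, at most
single-valued, with `dom A` a linear subspace on which `A` is linear and symmetric. Then
`q_A** = f`, where `f` is the Phelps–Simons function of `A`. -/
theorem stmt15 {X : Type*} [NormedAddCommGroup X] [NormedSpace ℝ X] [CompleteSpace X]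
    (hrefl : Function.Surjective (NormedSpace.inclusionInDoubleDual ℝ X))
    (A : X → Set (X →L[ℝ] ℝ))
    (hmax : MaximalMonotoneOp A)
    (hsingle : ∀ x, (A x).Subsingleton)
    (hdom : ∃ V : Submodule ℝ X, (V : Set X) = {x | (A x).Nonempty})
    (hadd : ∀ (x y : X) (x' y' : X →L[ℝ] ℝ), x' ∈ A x → y' ∈ A y → x' + y' ∈ A (x + y))
    (hsmul : ∀ (c : ℝ) (x : X) (x' : X →L[ℝ] ℝ), x' ∈ A x → c • x' ∈ A (c • x))
    (hsym : ∀ (x y : X) (x' y' : X →L[ℝ] ℝ), x' ∈ A x → y' ∈ A y → x' y = y' x) :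
    ebiconj (qOp A) = phelpsF A := by
  funext x
  apply le_antisymm
  · -- q_A** ≤ f
    refine iSup_le fun x' => ?_
    -- key: ⟨x, x'⟩ ≤ f(x) + q*(x')
    have hkey : ((x' x : ℝ) : EReal) ≤ phelpsF A x + econj (qOp A) x' := by
      by_cases hrel : ∀ ⦃y : X⦄ ⦃y' : X →L[ℝ] ℝ⦄, y' ∈ A y → 0 ≤ (x' - y') (x - y)
      · -- x' ∈ A x by maximality
        have hx : x' ∈ A x := mem_of_monotonically_related A hmax x x' hrel
        have h1 : ((x' x - 1 / 2 * x' x : ℝ) : EReal) ≤ phelpsF A x :=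
          le_iSup_of_le (x, x') (le_iSup_of_le hx le_rfl)
        have h2 : ((x' x - 1 / 2 * x' x : ℝ) : EReal) ≤ econj (qOp A) x' := by
          have := le_iSup (fun z => ((x' z : ℝ) : EReal) - qOp A z) x
          rwa [qOp_eq A hsingle hx, ← EReal.coe_sub] at this
        calc ((x' x : ℝ) : EReal)
            = ((x' x - 1 / 2 * x' x : ℝ) : EReal)
              + ((x' x - 1 / 2 * x' x : ℝ) : EReal) := by
              rw [← EReal.coe_add, EReal.coe_eq_coe_iff]; ring
          _ ≤ _ := add_le_add h1 h2
      · push_neg at hrel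
        obtain ⟨y, y', hy, hlt⟩ := hrel
        have hr : x' x ≤ (y' x - 1 / 2 * y' y) + (x' y - 1 / 2 * y' y) := by
          simp only [ContinuousLinearMap.sub_apply, map_sub] at hlt
          linarith
        have h1 : ((y' x - 1 / 2 * y' y : ℝ) : EReal) ≤ phelpsF A x :=
          le_iSup_of_le (y, y') (le_iSup_of_le hy le_rfl)
        have h2 : ((x' y - 1 / 2 * y' y : ℝ) : EReal) ≤ econj (qOp A) x' := by
          have := le_iSup (fun z => ((x' z : ℝ) : EReal) - qOp A z) y
          rwa [qOp_eq A hsingle hy, ← EReal.coe_sub] at this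
        calc ((x' x : ℝ) : EReal)
            ≤ (((y' x - 1 / 2 * y' y) + (x' y - 1 / 2 * y' y) : ℝ) : EReal) :=
              EReal.coe_le_coe_iff.mpr hr
          _ = ((y' x - 1 / 2 * y' y : ℝ) : EReal)
              + ((x' y - 1 / 2 * y' y : ℝ) : EReal) := EReal.coe_add _ _
          _ ≤ _ := add_le_add h1 h2
    exact EReal.sub_le_of_le_add hkey
  · -- f ≤ q_A**
    refine iSup_le fun p => iSup_le fun hp => ?_
    obtain ⟨y, y'⟩ := p
    simp only at hp ⊢
    -- use x* := y' in the biconjugate sup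
    refine le_iSup_of_le y' ?_
    have hconj : econj (qOp A) y' ≤ ((1 / 2 * y' y : ℝ) : EReal) := by
      refine iSup_le fun z => ?_
      by_cases hz : (A z).Nonempty
      · obtain ⟨z', hz'⟩ := hz
        rw [qOp_eq A hsingle hz', ← EReal.coe_sub]
        exact EReal.coe_le_coe_iff.mpr (key_ineq A hmax.1 hsym hp hz')
      · have : qOp A z = ⊤ := by simp only [qOp, dif_neg hz]
        rw [this, EReal.sub_top]
        exact bot_le
    calc ((y' x - 1 / 2 * y' y : ℝ) : EReal)
        = ((y' x : ℝ) : EReal) - ((1 / 2 * y' y : ℝ) : EReal) := EReal.coe_sub _ _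
      _ ≤ ((y' x : ℝ) : EReal) - econj (qOp A) y' := EReal.sub_le_sub le_rfl hconj
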